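/- Let k ≥ 3 be an integer and let G be a finite simple graph whose vertex set V is partitioned into k independent sets V₁, V₂, …, V_k of G, each of cardinality at least 3. For each i ∈ {1,…,k} let Bᵢ be a binary hierarchy on Vᵢ. Define H_C := {V} ∪ B₁ ∪ ⋯ ∪ B_k; for each pair of distinct a, b ∈ V define H_{a,b} := {V, {a}, {b}} ∪ ⋃_{i=1}^{k} {A ∖ {a,b} : A ∈ Bᵢ, A ∖ {a,b} ≠ ∅}; and for each edge e = {a,b} of G define H_{S_e} := {V, e, {a}, {b}} ∪ ⋃_{i=1}^{k} {A ∖ e : A ∈ Bᵢ, A ∖ e ≠ ∅}. Then G has an independent set I with |I ∩ Vᵢ| = 1 for every i ∈ {1,…,k} if and only if there exists a subset L ⊆ V with |L| = k such that the restrictions to L of all the hierarchies H_C, H_{a,b} (over all distinct a, b ∈ V) and H_{S_e} (over all edges e of G) are pairwise equal (i.e., the corresponding collection of trees has an agreement subtree of size k). -/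

import Mathlib

/-- An independent set of a simple graph: no two of its vertices are adjacent. -/
def IsIndep {α : Type*} (G : SimpleGraph α) (I : Set α) : Prop :=
  ∀ u ∈ I, ∀ v ∈ I, ¬ G.Adj u v

/-- `F` is a hierarchy on `L`: a family of nonempty subsets of `L` containing `L`
itself and all singletons, and laminar (any two members are disjoint or nested). -/
def IsHierarchy {α : Type*} (L : Set α) (F : Set (Set α)) : Prop :=
  (∀ A ∈ F, A ⊆ L ∧ A.Nonempty) ∧ L ∈ F ∧ (∀ x ∈ L, {x} ∈ F) ∧
    ∀ A ∈ F, ∀ B ∈ F, A ∩ B = ∅ ∨ A ⊆ B ∨ B ⊆ A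

/-- The restriction `H|L := {A ∩ L : A ∈ H, A ∩ L ≠ ∅}` of a family of sets `H`
to a set `L`. -/
def restrictH {α : Type*} (H : Set (Set α)) (L : Set α) : Set (Set α) :=
  {S | ∃ A ∈ H, S = A ∩ L ∧ S.Nonempty}


/-!
If `I` meets every part `Vᵢ` exactly once and contains no edge, then every tree of the collection
restricts on `I` to the star tree on `I`, so all the restrictions agree.

Conversely, let all restrictions to `L` agree, with `|L| = k ≥ 3`. Comparing `H_C` with `H_{x,y}`
shows that every cluster of `H_C|L` containing `x` is `L` or `{x}`, so `H_C|L` is contained in the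
star on `L`. Deleting one leaf from a laminar family loses at most two clusters, so a binary
hierarchy on `X` (with `2|X| - 1` clusters) cannot restrict into the star (`|L| + 1` clusters) on
any `L ⊆ X` with `|L| ≥ 3`. Hence `L` meets every `Vᵢ` at most once, hence exactly once since
`|L| = k`. An edge `{u, v} ⊆ L` would be a cluster of `H_{S_e}|L` that is not in the star.
-/

open Set

section

variable {α : Type*}

/-- The hierarchy of the star tree on `L`. -/
def starH (L : Set α) : Set (Set α) := insert L ((fun x => {x}) '' L)

def IsLaminar (F : Set (Set α)) : Prop :=
  ∀ A ∈ F, ∀ B ∈ F, A ∩ B = ∅ ∨ A ⊆ B ∨ B ⊆ A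

theorem IsHierarchy.isLaminar {X : Set α} {F : Set (Set α)} (h : IsHierarchy X F) :
    IsLaminar F :=
  h.2.2.2

theorem pair_notMem_starH {L : Set α} (hL : 3 ≤ L.ncard) {u v : α} (huv : u ≠ v) :
    {u, v} ∉ starH L := by
  rintro (h | ⟨x, -, h⟩) <;> have := congrArg ncard h
  · rw [ncard_pair huv] at this; omega
  · rw [ncard_pair huv, ncard_singleton] at this; omega

section restrictH

variable {H F : Set (Set α)} {L : Set α}

theorem mem_restrictH_of_subset {A : Set α} (hA : A ∈ H) (hAL : A ⊆ L) (hne : A.Nonempty) :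
    A ∈ restrictH H L :=
  ⟨A, hA, (inter_eq_left.2 hAL).symm, hne⟩

theorem restrictH_mono {H' : Set (Set α)} (h : H ⊆ H') (L : Set α) :
    restrictH H L ⊆ restrictH H' L :=
  fun _ ⟨A, hA, hS, hne⟩ => ⟨A, h hA, hS, hne⟩

theorem restrictH_univ (hne : ∀ A ∈ F, A.Nonempty) : restrictH F univ = F := by
  ext S
  constructor
  · rintro ⟨A, hA, rfl, -⟩
    simpa using hA
  · exact fun hS => mem_restrictH_of_subset hS (subset_univ S) (hne S hS)

theorem restrictH_restrictH (F : Set (Set α)) (L₁ L₂ : Set α) :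
    restrictH (restrictH F L₁) L₂ = restrictH F (L₁ ∩ L₂) := by
  ext S
  constructor
  · rintro ⟨-, ⟨A, hA, rfl, -⟩, rfl, hne⟩
    exact ⟨A, hA, inter_assoc _ _ _, hne⟩
  · rintro ⟨A, hA, rfl, hne⟩
    exact ⟨A ∩ L₁, ⟨A, hA, rfl, hne.mono fun x hx => ⟨hx.1, hx.2.1⟩⟩,
      (inter_assoc _ _ _).symm, hne⟩

theorem restrictH_congr {L' : Set α} (h : ∀ A ∈ F, A ∩ L = A ∩ L') :
    restrictH F L = restrictH F L' := by
  ext S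
  constructor <;> rintro ⟨A, hA, rfl, hne⟩
  · exact ⟨A, hA, h A hA, hne⟩
  · exact ⟨A, hA, (h A hA).symm, hne⟩

theorem IsLaminar.restrict (h : IsLaminar F) (L : Set α) : IsLaminar (restrictH F L) := by
  rintro - ⟨A, hA, rfl, -⟩ - ⟨B, hB, rfl, -⟩
  rcases h A hA B hB with hAB | hAB | hAB
  · left
    rw [← subset_empty_iff, ← hAB]
    exact fun x hx => ⟨hx.1.1, hx.2.1⟩
  · exact Or.inr (Or.inl (inter_subset_inter_left L hAB))
  · exact Or.inr (Or.inr (inter_subset_inter_left L hAB))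

theorem restrictH_eq_starH (hL : L.Nonempty) (hcover : ∃ A ∈ H, L ⊆ A)
    (hsingle : ∀ x ∈ L, {x} ∈ H) (hsub : ∀ A ∈ H, L ⊆ A ∨ (A ∩ L).Subsingleton) :
    restrictH H L = starH L := by
  ext S
  constructor
  · rintro ⟨A, hA, rfl, x, hx⟩
    rcases hsub A hA with hLA | hA
    · exact Or.inl (inter_eq_right.2 hLA)
    · exact Or.inr ⟨x, hx.2, (hA.eq_singleton_of_mem hx).symm⟩
  · rintro (rfl | ⟨x, hx, rfl⟩)
    · obtain ⟨A, hA, hLA⟩ := hcover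
      exact ⟨A, hA, (inter_eq_right.2 hLA).symm, hL⟩
    · exact mem_restrictH_of_subset (hsingle x hx) (singleton_subset_iff.2 hx)
        (singleton_nonempty x)

end restrictH

section Laminar

variable {F : Set (Set α)}

theorem IsLaminar.subset_of_insert_mem (h : IsLaminar F) {x : α} {S T : Set α}
    (hSne : S.Nonempty) (hT : T ∈ F) (hxT : x ∉ T) (hxS : insert x S ∈ F) (hST : S ⊆ T) :
    T ⊆ S := by
  rcases h _ hxS _ hT with hdisj | hsub | hsub
  · obtain ⟨y, hy⟩ := hSne
    have : y ∈ insert x S ∩ T := ⟨mem_insert_of_mem x hy, hST hy⟩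
    simp [hdisj] at this
  · exact absurd (hsub (mem_insert x S)) hxT
  · exact (subset_insert_iff_of_notMem hxT).1 hsub

theorem IsLaminar.eq_of_insert_mem (h : IsLaminar F) (hne : ∀ A ∈ F, A.Nonempty) {x : α}
    {S T : Set α} (hS : S ∈ F) (hT : T ∈ F) (hxS : x ∉ S) (hxT : x ∉ T)
    (hS' : insert x S ∈ F) (hT' : insert x T ∈ F) : S = T := by
  rcases h _ hS' _ hT' with hdisj | hsub | hsub
  · have : x ∈ insert x S ∩ insert x T := ⟨mem_insert x S, mem_insert x T⟩
    simp [hdisj] at this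
  · have hST : S ⊆ T := (subset_insert_iff_of_notMem hxS).1 ((subset_insert x S).trans hsub)
    exact hST.antisymm (h.subset_of_insert_mem (hne S hS) hT hxT hS' hST)
  · have hTS : T ⊆ S := (subset_insert_iff_of_notMem hxT).1 ((subset_insert x T).trans hsub)
    exact (hTS.antisymm (h.subset_of_insert_mem (hne T hT) hS hxS hT' hTS)).symm

/-- Clusters through `x` map injectively to `∅` or clusters of `F|{x}ᶜ`, and at most one of these
images is also a cluster avoiding `x` (by `IsLaminar.eq_of_insert_mem`). -/
theorem IsLaminar.ncard_le_ncard_restrictH_compl_singleton [Finite α] (h : IsLaminar F)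
    (hne : ∀ A ∈ F, A.Nonempty) (x : α) :
    F.ncard ≤ (restrictH F {x}ᶜ).ncard + 2 := by
  set R := restrictH F {x}ᶜ
  set F₁ := {A ∈ F | x ∈ A}
  set F₀ := F \ F₁
  have hF₀R : F₀ ⊆ R := fun A ⟨hA, hxA⟩ =>
    mem_restrictH_of_subset hA (subset_compl_singleton_iff.2 fun hx => hxA ⟨hA, hx⟩) (hne A hA)
  have hinj : InjOn (· \ {x}) F₁ := fun A ⟨_, hxA⟩ B ⟨_, hxB⟩ hAB => by
    rw [← insert_eq_of_mem hxA, ← insert_eq_of_mem hxB, ← insert_sdiff_singleton,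
      ← insert_sdiff_singleton (s := B)]
    exact congrArg (insert x) hAB
  have hF₁R : (· \ {x}) '' F₁ ⊆ insert ∅ R := by
    rintro - ⟨A, ⟨hA, -⟩, rfl⟩
    rcases (A \ {x}).eq_empty_or_nonempty with hA' | hA'
    · exact Or.inl hA'
    · exact Or.inr ⟨A, hA, rfl, hA'⟩
  have hoverlap : (F₀ ∩ (· \ {x}) '' F₁).Subsingleton := by
    rintro S ⟨⟨hS, hxS⟩, A, ⟨hA, hxA⟩, rfl⟩ T ⟨⟨hT, hxT⟩, B, ⟨hB, hxB⟩, rfl⟩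
    refine h.eq_of_insert_mem hne hS hT (fun hx => hxS ⟨hS, hx⟩) (fun hx => hxT ⟨hT, hx⟩) ?_ ?_
    · rwa [insert_sdiff_singleton, insert_eq_of_mem hxA]
    · rwa [insert_sdiff_singleton, insert_eq_of_mem hxB]
  have hsplit : F₀.ncard + F₁.ncard = F.ncard :=
    ncard_sdiff_add_ncard_of_subset (sep_subset F (x ∈ ·))
  have hunion := ncard_union_add_ncard_inter F₀ ((· \ {x}) '' F₁)
  have himage := hinj.ncard_image
  have hR := (ncard_le_ncard (union_subset (hF₀R.trans (subset_insert ∅ R)) hF₁R)).trans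
    (ncard_insert_le ∅ R)
  have hone := ncard_le_one_iff_subsingleton.2 hoverlap
  omega

theorem IsLaminar.ncard_le_ncard_restrictH_compl_add [Finite α] (D : Set α) (h : IsLaminar F)
    (hne : ∀ A ∈ F, A.Nonempty) : F.ncard ≤ (restrictH F Dᶜ).ncard + 2 * D.ncard := by
  induction D, D.toFinite using Set.Finite.induction_on generalizing F with
  | empty => simp [restrictH_univ hne]
  | @insert x D hxD hD ih =>
    have hstep := h.ncard_le_ncard_restrictH_compl_singleton hne x
    have hrest := ih (h.restrict {x}ᶜ) fun _ ⟨_, _, _, hne⟩ => hne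
    rw [restrictH_restrictH, ← compl_union, singleton_union] at hrest
    rw [ncard_insert_of_notMem hxD]
    omega

end Laminar

section Hierarchy

variable [Finite α] {X L : Set α} {B : Set (Set α)}

theorem ncard_starH_le (L : Set α) : (starH L).ncard ≤ L.ncard + 1 :=
  (ncard_insert_le _ _).trans (Nat.add_le_add_right (ncard_image_le L.toFinite) 1)

theorem IsHierarchy.not_restrictH_subset_starH (hB : IsHierarchy X B)
    (hbin : B.ncard = 2 * X.ncard - 1) (hLX : L ⊆ X) (hL : 3 ≤ L.ncard) :
    ¬ restrictH B L ⊆ starH L := by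
  intro hstar
  have hcount := hB.isLaminar.ncard_le_ncard_restrictH_compl_add (X \ L) fun A hA => (hB.1 A hA).2
  have hXL : ∀ A ∈ B, A ∩ (X \ L)ᶜ = A ∩ L := fun A hA => by
    ext y
    have := @(hB.1 A hA).1 y
    simp only [mem_inter_iff, mem_compl_iff, mem_sdiff]
    tauto
  rw [restrictH_congr hXL] at hcount
  have hstar_le := (ncard_le_ncard hstar).trans (ncard_starH_le L)
  have hdiff := ncard_sdiff hLX
  have hLX' := ncard_le_ncard hLX
  omega

theorem IsHierarchy.subsingleton_inter_of_restrictH_subset_starH (hB : IsHierarchy X B)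
    (hbin : B.ncard = 2 * X.ncard - 1) (hL : 3 ≤ L.ncard) (hstar : restrictH B L ⊆ starH L) :
    (L ∩ X).Subsingleton := by
  intro u hu v hv
  by_contra huv
  rcases hstar ⟨X, hB.2.1, rfl, u, hu.2, hu.1⟩ with hXL | ⟨x, -, hx⟩
  · exact hB.not_restrictH_subset_starH hbin (inter_eq_right.1 hXL) hL hstar
  · have hsub : (X ∩ L).Subsingleton := hx ▸ subsingleton_singleton
    exact huv (hsub ⟨hu.2, hu.1⟩ ⟨hv.2, hv.1⟩)

end Hierarchy

section Partition

variable {ι : Type*} {Vs : ι → Set α}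

theorem ncard_eq_card_of_ncard_inter_eq_one (hpart : ∀ x, ∃! i, x ∈ Vs i) {I : Set α}
    (hI : ∀ i, (I ∩ Vs i).ncard = 1) : I.ncard = Nat.card ι := by
  choose f hf using fun i => ncard_eq_one.1 (hI i)
  have hfI : ∀ i, f i ∈ I ∩ Vs i := fun i => (hf i).symm ▸ mem_singleton (f i)
  have hinj : Function.Injective f := fun i j hij =>
    (hpart (f i)).unique (hfI i).2 (hij ▸ (hfI j).2)
  have hrange : range f = I := by
    refine (range_subset_iff.2 fun i => (hfI i).1).antisymm fun x hx => ?_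
    obtain ⟨i, hi, -⟩ := hpart x
    exact ⟨i, (eq_of_mem_singleton (hf i ▸ ⟨hx, hi⟩ : x ∈ ({f i} : Set α))).symm⟩
  rw [← hrange, ncard_range_of_injective hinj]

theorem ncard_inter_eq_one_of_ncard_eq_card [Finite ι] (hcover : ∀ x, ∃ i, x ∈ Vs i) {L : Set α}
    (hL : L.ncard = Nat.card ι) (hsub : ∀ i, (L ∩ Vs i).Subsingleton) (i : ι) :
    (L ∩ Vs i).ncard = 1 := by
  choose idx hidx using hcover
  have hinj : InjOn idx L := fun x hx y hy hxy =>
    hsub (idx x) ⟨hx, hidx x⟩ ⟨hy, hxy ▸ hidx y⟩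
  have himage : idx '' L = univ :=
    eq_of_subset_of_ncard_le (subset_univ _) (by rw [hinj.ncard_image, hL, ncard_univ])
  obtain ⟨x, hx, rfl⟩ : i ∈ idx '' L := himage ▸ mem_univ i
  rw [(hsub (idx x)).eq_singleton_of_mem ⟨hx, hidx x⟩, ncard_singleton]

end Partition

theorem subsingleton_inter_of_subset {X I A : Set α} (hI : (I ∩ X).ncard = 1) (hA : A ⊆ X) :
    (A ∩ I).Subsingleton := by
  obtain ⟨y, hy⟩ := ncard_eq_one.1 hI
  exact (hy ▸ subsingleton_singleton : (I ∩ X).Subsingleton).anti fun z hz => ⟨hz.2, hA hz.1⟩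

theorem IsIndep.subsingleton_pair_inter {G : SimpleGraph α} {I : Set α} (hI : IsIndep G I)
    {a b : α} (hab : G.Adj a b) : ({a, b} ∩ I).Subsingleton := by
  rintro x ⟨rfl | rfl, hx⟩ y ⟨rfl | rfl, hy⟩
  exacts [rfl, (hI x hx y hy hab).elim, (hI y hy x hx hab).elim, rfl]

theorem restrictH_eq_starH_of_transversal {ι : Type*} {Vs : ι → Set α}
    {Bs : ι → Set (Set α)} (hcover : ∀ x, ∃ i, x ∈ Vs i) (hB : ∀ i, IsHierarchy (Vs i) (Bs i))
    {I : Set α} (hI : ∀ i, (I ∩ Vs i).ncard = 1) (hIne : I.Nonempty) {E : Set (Set α)}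
    {D : Set α} (huniv : univ ∈ E) (hE : ∀ A ∈ E, I ⊆ A ∨ (A ∩ I).Subsingleton)
    (hD : ∀ x ∈ D, {x} ∈ E) :
    restrictH (E ∪ ⋃ i, restrictH (Bs i) Dᶜ) I = starH I := by
  refine restrictH_eq_starH hIne ⟨univ, Or.inl huniv, subset_univ I⟩ (fun x _ => ?_) ?_
  · by_cases hxD : x ∈ D
    · exact Or.inl (hD x hxD)
    · obtain ⟨i, hi⟩ := hcover x
      exact Or.inr (mem_iUnion.2 ⟨i, mem_restrictH_of_subset ((hB i).2.2.1 x hi)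
        (singleton_subset_iff.2 hxD) (singleton_nonempty x)⟩)
  · rintro A (hA | hA)
    · exact hE A hA
    · obtain ⟨i, B, hB', rfl, -⟩ := mem_iUnion.1 hA
      exact Or.inr (subsingleton_inter_of_subset (hI i)
        (inter_subset_left.trans ((hB i).1 B hB').1))

theorem mem_starH_of_mem_restrictH_of_mem {ι : Type*} {Bs : ι → Set (Set α)} {x y : α}
    (hxy : x ≠ y) {L S : Set α}
    (hS : S ∈ restrictH ({univ, {x}, {y}} ∪ ⋃ i, restrictH (Bs i) {x, y}ᶜ) L) (hx : x ∈ S) :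
    S ∈ starH L := by
  obtain ⟨A, hA, rfl, -⟩ := hS
  rcases hA with (rfl | rfl | rfl) | hA
  · exact Or.inl (univ_inter L)
  · exact Or.inr ⟨x, hx.2, (inter_eq_left.2 (singleton_subset_iff.2 hx.2)).symm⟩
  · exact absurd hx.1 hxy
  · obtain ⟨i, A, -, rfl, -⟩ := mem_iUnion.1 hA
    exact absurd hx.1.2 (by simp)

theorem restrictH_subset_starH_of_restrictH_pair_eq {ι : Type*} {Bs : ι → Set (Set α)}
    {H : Set (Set α)} {L : Set α} (hL : 1 < L.ncard)
    (h : ∀ x y, x ≠ y → restrictH ({univ, {x}, {y}} ∪ ⋃ i, restrictH (Bs i) {x, y}ᶜ) L =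
      restrictH H L) :
    restrictH H L ⊆ starH L := by
  rintro S hS
  obtain ⟨-, -, -, x, hx⟩ := id hS
  obtain ⟨y, -, hyx⟩ := exists_ne_of_one_lt_ncard hL x
  rw [← h x y hyx.symm] at hS
  exact mem_starH_of_mem_restrictH_of_mem hyx.symm hS hx

end

theorem mast_reduction_correctness_general {α : Type*} [Fintype α]
    (G : SimpleGraph α) (k : ℕ) (hk : 3 ≤ k)
    -- the vertex set of `G` is partitioned into `k` independent sets `V₁, …, V_k`
    (Vs : Fin k → Set α)
    (hpart : ∀ x : α, ∃! i, x ∈ Vs i)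
    (Bs : Fin k → Set (Set α))
    -- each `Bᵢ` is a binary hierarchy on `Vᵢ` (binary ⇔ it has `2|Vᵢ| - 1` members)
    (hB : ∀ i, IsHierarchy (Vs i) (Bs i) ∧ (Bs i).ncard = 2 * (Vs i).ncard - 1) :
    -- `V` is the (whole) vertex set of `G`
    let V : Set α := Set.univ
    -- the hierarchy of the tree `C = ⟨B₁, …, B_k⟩`
    let HC : Set (Set α) := {V} ∪ ⋃ i, Bs i
    -- the hierarchy of the tree `C_{a,b}`
    let Hab : α → α → Set (Set α) := fun a b =>
      {V, {a}, {b}} ∪ ⋃ i, {S | ∃ A ∈ Bs i, S = A \ {a, b} ∧ S.Nonempty}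
    -- the hierarchy of the tree `S_e` for an edge `e = {a, b}` of `G`
    let HS : α → α → Set (Set α) := fun a b =>
      {V, {a, b}, {a}, {b}} ∪ ⋃ i, {S | ∃ A ∈ Bs i, S = A \ {a, b} ∧ S.Nonempty}
    ((∃ I : Set α, IsIndep G I ∧ ∀ i, (I ∩ Vs i).ncard = 1) ↔
      (∃ L : Set α, L.ncard = k ∧
        (∀ a b : α, a ≠ b → restrictH (Hab a b) L = restrictH HC L) ∧
        (∀ a b : α, G.Adj a b → restrictH (HS a b) L = restrictH HC L))) := by
  intro V HC Hab HS
  have hHC : HC = {univ} ∪ ⋃ i, restrictH (Bs i) ∅ᶜ := by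
    simp only [compl_empty, restrictH_univ fun A hA => ((hB _).1.1 A hA).2]
    rfl
  have hHab : ∀ a b, Hab a b = {univ, {a}, {b}} ∪ ⋃ i, restrictH (Bs i) {a, b}ᶜ :=
    fun _ _ => rfl
  have hHS : ∀ a b, HS a b = {univ, {a, b}, {a}, {b}} ∪ ⋃ i, restrictH (Bs i) {a, b}ᶜ :=
    fun _ _ => rfl
  have hcover : ∀ x, ∃ i, x ∈ Vs i := fun x => (hpart x).exists
  constructor
  · rintro ⟨I, hIndep, hI⟩
    have hIk : I.ncard = k := by simpa using ncard_eq_card_of_ncard_inter_eq_one hpart hI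
    have hstar {E : Set (Set α)} {D : Set α} :=
      restrictH_eq_starH_of_transversal (E := E) (D := D) hcover (fun i => (hB i).1) hI
        (nonempty_of_ncard_ne_zero (by omega))
    have hC : restrictH HC I = starH I := by
      rw [hHC]
      exact hstar (by simp) (by simp) (by simp)
    refine ⟨I, hIk, fun a b _ => ?_, fun a b hab => ?_⟩
    · rw [hC, hHab]
      exact hstar (by simp) (by simp [subsingleton_singleton.anti inter_subset_left]) (by simp)
    · rw [hC, hHS]
      exact hstar (by simp) (by simp [hIndep.subsingleton_pair_inter hab,
        subsingleton_singleton.anti inter_subset_left]) (by simp)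
  · rintro ⟨L, hLk, hLab, hLS⟩
    have hL3 : 3 ≤ L.ncard := hLk ▸ hk
    have hstar : restrictH HC L ⊆ starH L :=
      restrictH_subset_starH_of_restrictH_pair_eq (by omega) hLab
    have hsub : ∀ i, (L ∩ Vs i).Subsingleton := fun i =>
      (hB i).1.subsingleton_inter_of_restrictH_subset_starH (hB i).2 hL3
        ((restrictH_mono (subset_union_of_subset_right (subset_iUnion Bs i) _) L).trans hstar)
    refine ⟨L, fun u hu v hv huv => ?_,
      ncard_inter_eq_one_of_ncard_eq_card hcover (by simpa using hLk) hsub⟩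
    have hpair : {u, v} ∈ restrictH (HS u v) L :=
      mem_restrictH_of_subset (by simp [HS]) (pair_subset hu hv) (insert_nonempty u {v})
    exact pair_notMem_starH hL3 huv.ne (hstar (hLS u v huv ▸ hpair))

theorem mast_reduction_correctness {α : Type*} [Fintype α]
    (G : SimpleGraph α) (k : ℕ) (hk : 3 ≤ k)
    -- the vertex set of `G` is partitioned into `k` independent sets `V₁, …, V_k`
    (Vs : Fin k → Set α)
    (hpart : ∀ x : α, ∃! i, x ∈ Vs i)
    (hindep : ∀ i, IsIndep G (Vs i))
    (hcard3 : ∀ i, 3 ≤ (Vs i).ncard)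
    (Bs : Fin k → Set (Set α))
    -- each `Bᵢ` is a binary hierarchy on `Vᵢ` (binary ⇔ it has `2|Vᵢ| - 1` members)
    (hB : ∀ i, IsHierarchy (Vs i) (Bs i) ∧ (Bs i).ncard = 2 * (Vs i).ncard - 1) :
    -- `V` is the (whole) vertex set of `G`
    let V : Set α := Set.univ
    -- the hierarchy of the tree `C = ⟨B₁, …, B_k⟩`
    let HC : Set (Set α) := {V} ∪ ⋃ i, Bs i
    -- the hierarchy of the tree `C_{a,b}`
    let Hab : α → α → Set (Set α) := fun a b =>
      {V, {a}, {b}} ∪ ⋃ i, {S | ∃ A ∈ Bs i, S = A \ {a, b} ∧ S.Nonempty}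
    -- the hierarchy of the tree `S_e` for an edge `e = {a, b}` of `G`
    let HS : α → α → Set (Set α) := fun a b =>
      {V, {a, b}, {a}, {b}} ∪ ⋃ i, {S | ∃ A ∈ Bs i, S = A \ {a, b} ∧ S.Nonempty}
    ((∃ I : Set α, IsIndep G I ∧ ∀ i, (I ∩ Vs i).ncard = 1) ↔
      (∃ L : Set α, L.ncard = k ∧
        (∀ a b : α, a ≠ b → restrictH (Hab a b) L = restrictH HC L) ∧
        (∀ a b : α, G.Adj a b → restrictH (HS a b) L = restrictH HC L))) :=
  mast_reduction_correctness_general G k hk Vs hpart Bs hB
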